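/- Let d ≥ 3, λ ∈ [-2√(d-1), 2√(d-1)], and let C be the 4×4 matrix with entries C_{ij} = φ(|i-j|) for 1 ≤ i,j ≤ 4, where φ is the Chebyshev covariance function of the Gaussian wave process. If C is invertible, then the conditional expectation weights w = C^{-1}·(φ(2), φ(1), φ(1), φ(2))^T (giving E(ψ(v_k) | ψ(v_{k±1}), ψ(v_{k±2})) = w·(ψ(v_{k-2}),ψ(v_{k-1}),ψ(v_{k+1}),ψ(v_{k+2}))) equal w = (-a_2/2, a_1/2, a_1/2, -a_2/2) with a_1 = 2dλ/(λ²+(d-1)²+1) and a_2 = 2(d-1)/(λ²+(d-1)²+1). -/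

import Mathlib

/-- Chebyshev polynomial of the second kind, evaluated at a real point
(with the convention `U (-1) = 0`, so that `φ 1 = λ/d`). -/
noncomputable def chebU (n : ℤ) (x : ℝ) : ℝ :=
  (Polynomial.Chebyshev.U ℝ n).eval x

/-- The covariance function `φ` of the Gaussian wave process on the `d`-regular tree
at spectral parameter `l`:
`φ(n) = (d-1)^{-n/2} ( ((d-1)/d) Uₙ(l/(2√(d-1))) - (1/d) U_{n-2}(l/(2√(d-1))) )`. -/
noncomputable def phi (d : ℕ) (l : ℝ) (n : ℕ) : ℝ :=
  ((d : ℝ) - 1) ^ (-(n : ℝ) / 2) *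
    (((d : ℝ) - 1) / d * chebU (n : ℤ) (l / (2 * Real.sqrt ((d : ℝ) - 1)))
      - 1 / d * chebU ((n : ℤ) - 2) (l / (2 * Real.sqrt ((d : ℝ) - 1))))


open Matrix

/-!
With `s = √(d-1)` and `x = λ/(2s)`, the Chebyshev recurrence `U_{n+2} = 2x U_{n+1} - U_n` turns
into the three-term recurrence `(d-1) φ(n+2) = λ φ(n+1) - φ(n)` of a radial eigenfunction of the
tree. Together with `φ(0) = 1` and `φ(1) = λ/d` it gives `φ(2), φ(3), φ(4)` as rational
functions of `λ` and `d`. The covariance matrix is a symmetric Toeplitz matrix, invariant under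
reversing the path, so `C w = (φ(2), φ(1), φ(1), φ(2))` amounts to two rational identities
between `φ(0), …, φ(4)`.
-/

open Polynomial

lemma Real.rpow_neg_natCast_div_two {x : ℝ} (hx : 0 ≤ x) (n : ℕ) :
    x ^ (-(n : ℝ) / 2) = (√x ^ n)⁻¹ := by
  rw [show -(n : ℝ) / 2 = 1 / 2 * -(n : ℝ) by ring, Real.rpow_mul hx, ← Real.sqrt_eq_rpow,
    Real.rpow_neg (Real.sqrt_nonneg x), Real.rpow_natCast]

section phi

variable {d : ℕ} (l : ℝ)

lemma exists_phi_eq (hd : 2 ≤ d) :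
    ∃ s x : ℝ, 0 < s ∧ (d : ℝ) = s ^ 2 + 1 ∧ l = 2 * x * s ∧ ∀ n : ℕ,
      phi d l n =
        (s ^ n)⁻¹ * (s ^ 2 / (s ^ 2 + 1) * chebU n x - 1 / (s ^ 2 + 1) * chebU (n - 2) x) := by
  have hd' : (1 : ℝ) < d := by exact_mod_cast hd
  have hs : 0 < √((d : ℝ) - 1) := Real.sqrt_pos.2 (by linarith)
  have hsq : √((d : ℝ) - 1) ^ 2 = d - 1 := Real.sq_sqrt (by linarith)
  refine ⟨√((d : ℝ) - 1), l / (2 * √((d : ℝ) - 1)), hs, by linarith, by field_simp,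
    fun n => ?_⟩
  rw [phi, Real.rpow_neg_natCast_div_two (by linarith), hsq]
  ring_nf

lemma natCast_sub_one_ne_zero (hd : 2 ≤ d) : (d : ℝ) - 1 ≠ 0 := by
  have : (2 : ℝ) ≤ d := by exact_mod_cast hd
  linarith

lemma phi_zero (hd : 2 ≤ d) : phi d l 0 = 1 := by
  obtain ⟨s, x, -, -, -, hφ⟩ := exists_phi_eq l hd
  simp only [hφ, pow_zero, inv_one, chebU, Nat.cast_zero, Chebyshev.U_zero, eval_one, zero_sub,
    Chebyshev.U_neg_two, eval_neg]
  field_simp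
  ring

lemma phi_one (hd : 2 ≤ d) : phi d l 1 = l / d := by
  obtain ⟨s, x, hs, hds, rfl, hφ⟩ := exists_phi_eq l hd
  simp only [hφ, pow_one, chebU, Nat.cast_one, Chebyshev.U_one, eval_mul, eval_ofNat, eval_X,
    Int.reduceSub, Chebyshev.U_neg_one, eval_zero, mul_zero, sub_zero, hds]
  field_simp

lemma phi_add_two (hd : 2 ≤ d) (n : ℕ) :
    ((d : ℝ) - 1) * phi d l (n + 2) = l * phi d l (n + 1) - phi d l n := by
  obtain ⟨s, x, hs, hds, rfl, hφ⟩ := exists_phi_eq l hd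
  simp only [hφ, hds, chebU]
  push_cast
  rw [show (n : ℤ) + 1 - 2 = n - 1 by ring, show (n : ℤ) + 2 - 2 = n by ring,
    Chebyshev.U_add_two, Chebyshev.U_eq ℝ n]
  simp only [eval_sub, eval_mul, eval_ofNat, eval_X]
  field_simp
  ring

lemma phi_two (hd : 2 ≤ d) : phi d l 2 = (l ^ 2 - d) / (d * ((d : ℝ) - 1)) := by
  have h : ((d : ℝ) - 1) * phi d l 2 = l * phi d l 1 - phi d l 0 := phi_add_two l hd 0
  rw [phi_one l hd, phi_zero l hd] at h
  have := natCast_sub_one_ne_zero hd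
  field_simp at h ⊢
  linear_combination h

lemma phi_three (hd : 2 ≤ d) :
    phi d l 3 = (l ^ 3 - (2 * d - 1) * l) / (d * ((d : ℝ) - 1) ^ 2) := by
  have h : ((d : ℝ) - 1) * phi d l 3 = l * phi d l 2 - phi d l 1 := phi_add_two l hd 1
  rw [phi_two l hd, phi_one l hd] at h
  have := natCast_sub_one_ne_zero hd
  field_simp at h ⊢
  linear_combination h

lemma phi_four (hd : 2 ≤ d) :
    phi d l 4 =
      (l ^ 4 - (3 * d - 2) * l ^ 2 + d * ((d : ℝ) - 1)) / (d * ((d : ℝ) - 1) ^ 3) := by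
  have h : ((d : ℝ) - 1) * phi d l 4 = l * phi d l 3 - phi d l 2 := phi_add_two l hd 2
  rw [phi_three l hd, phi_two l hd] at h
  have := natCast_sub_one_ne_zero hd
  field_simp at h ⊢
  linear_combination h

lemma phi_inner_row (hd : 2 ≤ d) :
    d * l * (phi d l 0 + phi d l 2) - ((d : ℝ) - 1) * (phi d l 1 + phi d l 3)
      = (l ^ 2 + ((d : ℝ) - 1) ^ 2 + 1) * phi d l 1 := by
  have := natCast_sub_one_ne_zero hd
  rw [phi_zero l hd, phi_one l hd, phi_two l hd, phi_three l hd]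
  field_simp
  ring

lemma phi_outer_row (hd : 2 ≤ d) :
    d * l * (phi d l 1 + phi d l 3) - ((d : ℝ) - 1) * (phi d l 0 + phi d l 4)
      = (l ^ 2 + ((d : ℝ) - 1) ^ 2 + 1) * phi d l 2 := by
  have := natCast_sub_one_ne_zero hd
  rw [phi_zero l hd, phi_one l hd, phi_two l hd, phi_three l hd, phi_four l hd]
  field_simp
  ring

end phi

lemma pathCovariance_eq (d : ℕ) (l : ℝ) :
    (Matrix.of fun i j =>
      phi d l ((![(-2 : ℤ), -1, 1, 2] i) - (![(-2 : ℤ), -1, 1, 2] j)).natAbs) =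
      !![phi d l 0, phi d l 1, phi d l 3, phi d l 4;
         phi d l 1, phi d l 0, phi d l 2, phi d l 3;
         phi d l 3, phi d l 2, phi d l 0, phi d l 1;
         phi d l 4, phi d l 3, phi d l 1, phi d l 0] := by
  ext i j
  fin_cases i <;> fin_cases j <;> rfl

lemma covariance_mulVec_weights {d : ℕ} (hd : 2 ≤ d) (l : ℝ) :
    !![phi d l 0, phi d l 1, phi d l 3, phi d l 4;
         phi d l 1, phi d l 0, phi d l 2, phi d l 3;
         phi d l 3, phi d l 2, phi d l 0, phi d l 1;
         phi d l 4, phi d l 3, phi d l 1, phi d l 0] *ᵥ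
      ![-(2 * ((d : ℝ) - 1) / (l ^ 2 + ((d : ℝ) - 1) ^ 2 + 1)) / 2,
        (2 * d * l / (l ^ 2 + ((d : ℝ) - 1) ^ 2 + 1)) / 2,
        (2 * d * l / (l ^ 2 + ((d : ℝ) - 1) ^ 2 + 1)) / 2,
        -(2 * ((d : ℝ) - 1) / (l ^ 2 + ((d : ℝ) - 1) ^ 2 + 1)) / 2]
      = ![phi d l 2, phi d l 1, phi d l 1, phi d l 2] := by
  have hD : l ^ 2 + ((d : ℝ) - 1) ^ 2 + 1 ≠ 0 := by positivity
  have h₁ := phi_inner_row l hd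
  have h₂ := phi_outer_row l hd
  simp only [cons_mulVec, dotProduct_cons, dotProduct_of_isEmpty, empty_mulVec,
    vecCons_inj, head_cons, tail_cons, add_zero, and_true]
  refine ⟨?_, ?_, ?_, ?_⟩
  · field_simp
    linear_combination h₂
  · field_simp
    linear_combination h₁
  · field_simp
    linear_combination h₁
  · field_simp
    linear_combination h₂

theorem conditional_weights_general (d : ℕ) (hd : 3 ≤ d) (l : ℝ)
    (C : Matrix (Fin 4) (Fin 4) ℝ)
    (hC : C = Matrix.of fun i j =>
      phi d l ((![(-2 : ℤ), -1, 1, 2] i) - (![(-2 : ℤ), -1, 1, 2] j)).natAbs)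
    (hinv : IsUnit C.det) :
    C⁻¹ *ᵥ ![phi d l 2, phi d l 1, phi d l 1, phi d l 2]
      = ![-(2 * ((d : ℝ) - 1) / (l ^ 2 + ((d : ℝ) - 1) ^ 2 + 1)) / 2,
          (2 * d * l / (l ^ 2 + ((d : ℝ) - 1) ^ 2 + 1)) / 2,
          (2 * d * l / (l ^ 2 + ((d : ℝ) - 1) ^ 2 + 1)) / 2,
          -(2 * ((d : ℝ) - 1) / (l ^ 2 + ((d : ℝ) - 1) ^ 2 + 1)) / 2] := by
  subst hC
  rw [pathCovariance_eq] at hinv ⊢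
  have := invertibleOfIsUnitDet _ hinv
  exact inv_mulVec_eq_vec (covariance_mulVec_weights (by omega) l).symm

/-- The conditional expectation weights of `psi(v_k)` given its four path-neighbours
`v_{k-2}, v_{k-1}, v_{k+1}, v_{k+2}` equal `(-a2/2, a1/2, a1/2, -a2/2)`, where
`a1 = 2dl/(l^2+(d-1)^2+1)` and `a2 = 2(d-1)/(l^2+(d-1)^2+1)`. -/
theorem conditional_weights (d : ℕ) (hd : 3 ≤ d) (l : ℝ)
    (hl : l ∈ Set.Icc (-(2 * Real.sqrt ((d : ℝ) - 1))) (2 * Real.sqrt ((d : ℝ) - 1)))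
    (C : Matrix (Fin 4) (Fin 4) ℝ)
    (hC : C = Matrix.of fun i j =>
      phi d l ((![(-2 : ℤ), -1, 1, 2] i) - (![(-2 : ℤ), -1, 1, 2] j)).natAbs)
    (hinv : IsUnit C.det) :
    C⁻¹ *ᵥ ![phi d l 2, phi d l 1, phi d l 1, phi d l 2]
      = ![-(2 * ((d : ℝ) - 1) / (l ^ 2 + ((d : ℝ) - 1) ^ 2 + 1)) / 2,
          (2 * d * l / (l ^ 2 + ((d : ℝ) - 1) ^ 2 + 1)) / 2,
          (2 * d * l / (l ^ 2 + ((d : ℝ) - 1) ^ 2 + 1)) / 2,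
          -(2 * ((d : ℝ) - 1) / (l ^ 2 + ((d : ℝ) - 1) ^ 2 + 1)) / 2] :=
  conditional_weights_general d hd l C hC hinv
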